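/- arXiv:2211.11056 — 4 statements merged into one kernel-verified Lean document; each statement's English description precedes it below -/
import Mathlib

section
/- Let h : ℝ → ℝ be differentiable with h(0) ≤ 0, and suppose that for every t ≥ 0 with h(t) = 0 one has h'(t) < 0. Then h(t) ≤ 0 for all t ≥ 0. -/
/-- Scalar comparison lemma for forward invariance: if `h` is differentiable,
`h 0 ≤ 0`, and whenever `h t = 0` at a time `t ≥ 0` the derivative is strictly
negative, then `h t ≤ 0` for all `t ≥ 0`. -/
theorem barrier_scalar_invariance (h : ℝ → ℝ) (hdiff : Differentiable ℝ h)
    (h0 : h 0 ≤ 0) (hbnd : ∀ t, 0 ≤ t → h t = 0 → deriv h t < 0) :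
    ∀ t, 0 ≤ t → h t ≤ 0 := fun _ ht =>
  image_le_of_deriv_right_lt_deriv_boundary (B := 0) (B' := 0)
    hdiff.continuous.continuousOn (fun s _ => (hdiff s).hasDerivAt.hasDerivWithinAt) h0
    (fun _ => hasDerivAt_const _ _) (fun s hs => hbnd s hs.1) ⟨ht, le_rfl⟩
end

section
/- Let E be a finite-dimensional real inner product space, let φ : E → ℝ be continuously differentiable, and let F : E → E be continuous (the closed-loop vector field F(y) = f(y) + g(y)k(y)). Define the safe set S = {y ∈ E : φ(y) ≤ 0}. Suppose that for every y ∈ E with φ(y) = 0 one has ⟨∇φ(y), F(y)⟩ < 0. Then for every differentiable curve x : ℝ → E satisfying x'(t) = F(x(t)) for all t ≥ 0 and x(0) ∈ S, we have x(t) ∈ S for all t ≥ 0. -/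
open RealInnerProductSpace

theorem HasGradientAt.comp_hasDerivAt {E : Type*} [NormedAddCommGroup E]
    [InnerProductSpace ℝ E] [CompleteSpace E] {φ : E → ℝ} {g : E} {x : ℝ → E} {v : E} {t : ℝ}
    (hφ : HasGradientAt φ g (x t)) (hx : HasDerivAt x v t) :
    HasDerivAt (φ ∘ x) ⟪g, v⟫ t := by
  simpa only [InnerProductSpace.toDual_apply_apply] using hφ.hasFDerivAt.comp_hasDerivAt t hx

theorem cbf_forward_invariance_general
    {E : Type*} [NormedAddCommGroup E] [InnerProductSpace ℝ E]
    [FiniteDimensional ℝ E]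
    (φ : E → ℝ) (hφ : ContDiff ℝ 1 φ)
    (F : E → E)
    (hbnd : ∀ y : E, φ y = 0 → ⟪gradient φ y, F y⟫ < 0) :
    ∀ x : ℝ → E, Differentiable ℝ x → (∀ t, 0 ≤ t → deriv x t = F (x t)) →
      x 0 ∈ {y : E | φ y ≤ 0} → ∀ t, 0 ≤ t → x t ∈ {y : E | φ y ≤ 0} := by
  intro x hx hode hx0 t ht
  have hφx (u : ℝ) (hu : 0 ≤ u) : HasDerivAt (φ ∘ x) ⟪gradient φ (x u), F (x u)⟫ u :=
    (hφ.differentiable one_ne_zero _).hasGradientAt.comp_hasDerivAt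
      (hode u hu ▸ (hx u).hasDerivAt)
  -- Fencing against the constant barrier `0`: where `φ ∘ x` touches it, its slope is negative.
  exact image_le_of_deriv_right_lt_deriv_boundary
    (hφ.continuous.comp hx.continuous).continuousOn
    (fun u hu => (hφx u hu.1).hasDerivWithinAt) hx0 (fun _ => hasDerivAt_const _ (0 : ℝ))
    (fun u _ hu0 => hbnd (x u) hu0) ⟨ht, le_rfl⟩

/-- Forward invariance of the zero-sublevel set `S = {y | φ y ≤ 0}` of a `C¹`
barrier function `φ` under a continuous closed-loop vector field `F`, when the
Lie derivative `⟪∇φ(y), F(y)⟫` is strictly negative on the boundary `{φ = 0}`. -/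
theorem cbf_forward_invariance
    {E : Type*} [NormedAddCommGroup E] [InnerProductSpace ℝ E]
    [FiniteDimensional ℝ E]
    (φ : E → ℝ) (hφ : ContDiff ℝ 1 φ)
    (F : E → E) (hF : Continuous F)
    (hbnd : ∀ y : E, φ y = 0 → ⟪gradient φ y, F y⟫ < 0) :
    ∀ x : ℝ → E, Differentiable ℝ x → (∀ t, 0 ≤ t → deriv x t = F (x t)) →
      x 0 ∈ {y : E | φ y ≤ 0} → ∀ t, 0 ≤ t → x t ∈ {y : E | φ y ≤ 0} :=
  cbf_forward_invariance_general φ hφ F hbnd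
end

section
/- Let h : ℝ → ℝ be differentiable and let α : ℝ → ℝ be continuous, strictly monotonically increasing, with α(0) = 0. Suppose h(0) ≤ 0 and h'(t) ≤ −α(h(t)) for all t ≥ 0. Then h(t) ≤ 0 for all t ≥ 0. -/
/-!
Each level `ε > 0` is a barrier for `h`: wherever `h = ε`, the slope is at most `-α ε < 0`, so
by the fencing theorem `image_le_of_deriv_right_lt_deriv_boundary` `h` never rises above `ε`.
Letting `ε → 0` gives `h ≤ 0`.
-/

theorem nonpos_of_deriv_neg_of_pos {f : ℝ → ℝ} {a : ℝ} (hf : Differentiable ℝ f) (ha : f a ≤ 0)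
    (hneg : ∀ t, a ≤ t → 0 < f t → deriv f t < 0) : ∀ t, a ≤ t → f t ≤ 0 := by
  intro t hat
  refine le_of_forall_gt_imp_ge_of_dense fun ε hε => ?_
  have hfence : ∀ x ∈ Set.Icc a t, f x ≤ ε :=
    image_le_of_deriv_right_lt_deriv_boundary (B := fun _ => ε) (B' := fun _ => 0)
      hf.continuous.continuousOn (fun x _ => (hf x).hasDerivAt.hasDerivWithinAt)
      (ha.trans hε.le) (fun _ => hasDerivAt_const _ _)
      (fun x hx hfx => hneg x hx.1 (hfx ▸ hε))
  exact hfence t ⟨hat, le_rfl⟩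

theorem class_kappa_comparison_general (h : ℝ → ℝ) (hdiff : Differentiable ℝ h)
    (α : ℝ → ℝ) (hαmono : StrictMono α) (hα0 : α 0 = 0)
    (h0 : h 0 ≤ 0) (hineq : ∀ t, 0 ≤ t → deriv h t ≤ -α (h t)) :
    ∀ t, 0 ≤ t → h t ≤ 0 :=
  nonpos_of_deriv_neg_of_pos hdiff h0 fun t ht hpos =>
    have hαpos : 0 < α (h t) := hα0 ▸ hαmono hpos
    (hineq t ht).trans_lt (neg_neg_of_pos hαpos)

/-- Comparison lemma for the class-κ CBF formulation: if `α` is a class-κ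
function (continuous, strictly increasing, `α 0 = 0`), `h 0 ≤ 0`, and
`h'(t) ≤ -α (h t)` for all `t ≥ 0`, then `h t ≤ 0` for all `t ≥ 0`. -/
theorem class_kappa_comparison (h : ℝ → ℝ) (hdiff : Differentiable ℝ h)
    (α : ℝ → ℝ) (hαc : Continuous α) (hαmono : StrictMono α) (hα0 : α 0 = 0)
    (h0 : h 0 ≤ 0) (hineq : ∀ t, 0 ≤ t → deriv h t ≤ -α (h t)) :
    ∀ t, 0 ≤ t → h t ≤ 0 :=
  class_kappa_comparison_general h hdiff α hαmono hα0 h0 hineq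
end

section
/- Let r ≥ 1, let c : ℕ → ℝ with c(j) > 0 for all j < r − 1, and let h : ℝ → ℝ be r-times continuously differentiable. Define functions F_j : ℝ → ℝ recursively by F_0 = h and F_{j+1}(t) = F_j(t) + c(j)·F_j'(t). Suppose F_j(0) ≤ 0 for every j ≤ r − 1, and F_{r−1}(t) ≤ 0 for all t ≥ 0. Then h(t) ≤ 0 for all t ≥ 0. -/
/-! Each step `F_{j+1} = F_j + c_j F_j'` with `c_j > 0` is inverted by the integrating factor
`e^{t/c_j}`: the derivative of `e^{t/c_j} F_j` is `e^{t/c_j} F_{j+1} / c_j`, so if `F_{j+1} ≤ 0`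
on `[0, ∞)` then `e^{t/c_j} F_j` is antitone there and `F_j` inherits nonpositivity from
`F_j(0) ≤ 0`. Descending from `F_{r-1}` to `F_0 = h` proves the claim. -/

/-- The higher-order CBF terms along a trajectory: `hocbf c h 0 = h` and
`hocbf c h (j+1) = hocbf c h j + c j * (hocbf c h j)'`. -/
noncomputable def hocbf (c : ℕ → ℝ) (h : ℝ → ℝ) : ℕ → (ℝ → ℝ)
  | 0 => h
  | j + 1 => fun t => hocbf c h j t + c j * deriv (hocbf c h j) t

open Set

theorem nonpos_of_add_mul_deriv_nonpos {f : ℝ → ℝ} {c : ℝ} (hc : 0 < c)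
    (hf : Differentiable ℝ f) (h0 : f 0 ≤ 0) (hle : ∀ t, 0 ≤ t → f t + c * deriv f t ≤ 0) :
    ∀ t, 0 ≤ t → f t ≤ 0 := by
  set g : ℝ → ℝ := fun t => Real.exp (t / c) * f t
  have hg : ∀ t, HasDerivAt g (Real.exp (t / c) / c * (f t + c * deriv f t)) t := by
    intro t
    refine ((((hasDerivAt_id t).div_const c).exp).mul (hf t).hasDerivAt).congr_deriv ?_
    simp only [id]
    field_simp
  have hg_anti : AntitoneOn g (Ici 0) := by
    refine antitoneOn_of_deriv_nonpos (convex_Ici 0)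
      (fun t _ => (hg t).continuousAt.continuousWithinAt)
      (fun t _ => (hg t).differentiableAt.differentiableWithinAt) fun t ht => ?_
    rw [interior_Ici] at ht
    rw [(hg t).deriv]
    exact mul_nonpos_of_nonneg_of_nonpos (by positivity) (hle t (le_of_lt ht))
  intro t ht
  have hgt : g t ≤ 0 := calc
    g t ≤ g 0 := hg_anti self_mem_Ici ht ht
    _ = f 0 := by simp [g]
    _ ≤ 0 := h0
  exact nonpos_of_mul_nonpos_right hgt (Real.exp_pos _)

@[simp]
theorem hocbf_zero (c : ℕ → ℝ) (h : ℝ → ℝ) : hocbf c h 0 = h :=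
  rfl

theorem contDiff_hocbf {c : ℕ → ℝ} {h : ℝ → ℝ} {n : WithTop ℕ∞} {j : ℕ}
    (hh : ContDiff ℝ (n + j) h) : ContDiff ℝ n (hocbf c h j) := by
  induction j generalizing n with
  | zero => simpa using hh
  | succ j ih =>
    have hj : ContDiff ℝ (n + 1) (hocbf c h j) :=
      ih (by rwa [Nat.cast_succ, ← add_assoc, add_right_comm] at hh)
    exact (hj.of_le le_self_add).add (contDiff_const.mul (contDiff_succ_iff_deriv.mp hj).2.2)

theorem hocbf_nonpos_of_nonpos {c : ℕ → ℝ} {h : ℝ → ℝ} {m : ℕ}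
    (hc : ∀ j < m, 0 < c j) (hh : ContDiff ℝ m h) (h0 : ∀ j < m, hocbf c h j 0 ≤ 0)
    (hm : ∀ t, 0 ≤ t → hocbf c h m t ≤ 0) :
    ∀ j ≤ m, ∀ t, 0 ≤ t → hocbf c h j t ≤ 0 := by
  intro j hj
  induction hj using Nat.decreasingInduction with
  | self => exact hm
  | of_succ j hjm ih =>
    have hdiff : Differentiable ℝ (hocbf c h j) :=
      (contDiff_hocbf (n := 1) (hh.of_le (by norm_cast; omega))).differentiable one_ne_zero
    exact nonpos_of_add_mul_deriv_nonpos (hc j hjm) hdiff (h0 j hjm) ih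

theorem higher_order_cbf_invariance_general (r : ℕ) (c : ℕ → ℝ)
    (hc : ∀ j, j < r - 1 → 0 < c j) (h : ℝ → ℝ) (hh : ContDiff ℝ r h)
    (h0 : ∀ j, j ≤ r - 1 → hocbf c h j 0 ≤ 0)
    (htop : ∀ t, 0 ≤ t → hocbf c h (r - 1) t ≤ 0) :
    ∀ t, 0 ≤ t → h t ≤ 0 :=
  hocbf_nonpos_of_nonpos hc (hh.of_le (by exact_mod_cast r.sub_le 1)) (fun j hj => h0 j hj.le)
    htop 0 (Nat.zero_le _)

/-- Higher-order CBF lemma: for `r ≥ 1` and positive coefficients `c j`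
(`j < r - 1`), if all the terms `φ_j` (`j ≤ r - 1`) are nonpositive at time `0`
and the highest-order term `φ_{r-1}` stays nonpositive for all `t ≥ 0`, then
the safety specification `h` stays nonpositive for all `t ≥ 0`. -/
theorem higher_order_cbf_invariance (r : ℕ) (hr : 1 ≤ r) (c : ℕ → ℝ)
    (hc : ∀ j, j < r - 1 → 0 < c j) (h : ℝ → ℝ) (hh : ContDiff ℝ r h)
    (h0 : ∀ j, j ≤ r - 1 → hocbf c h j 0 ≤ 0)
    (htop : ∀ t, 0 ≤ t → hocbf c h (r - 1) t ≤ 0) :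
    ∀ t, 0 ≤ t → h t ≤ 0 :=
  higher_order_cbf_invariance_general r c hc h hh h0 htop
end
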